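/- Let $p \geq 3$ be a prime, $a$ an integer with $\gcd(a,p)=1$, $e \geq 1$ and $f \geq 2$. Then the Salié sum $S(a, p^e b, p^f) = 0$ for any integer $b$. -/

import Mathlib

open Complex Real

/-- The Salié sum `S(a,b,l) = ∑_{h mod l, (h,l)=1} (h/l) e^{2πi(ah + b h̄)/l}`,
where `(·/l)` is the Jacobi symbol and `h̄` is the inverse of `h` mod `l`. -/
noncomputable def salie (a b : ℤ) (l : ℕ) : ℂ :=
  ∑ h ∈ (Finset.range l).filter (fun h => Nat.Coprime h l),
    (jacobiSym (h : ℤ) l : ℂ) *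
      Complex.exp (2 * Real.pi * Complex.I *
        ((a : ℂ) * (h : ℂ) + (b : ℂ) * ((((h : ZMod l)⁻¹).val : ℕ) : ℂ)) / (l : ℂ))

private lemma exp_congr13 (l : ℕ) (hl : 0 < l) (x y : ℤ) (h : (l : ℤ) ∣ (x - y)) :
    Complex.exp (2 * Real.pi * Complex.I * (x : ℂ) / l) =
      Complex.exp (2 * Real.pi * Complex.I * (y : ℂ) / l) := by
  obtain ⟨k, hk⟩ := h
  have hx : (x : ℂ) = (y : ℂ) + (l : ℂ) * (k : ℂ) := by
    have : x = y + (l : ℤ) * k := by linarith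
    exact_mod_cast congrArg (fun z : ℤ => (z : ℂ)) this
  have hl' : (l : ℂ) ≠ 0 := by exact_mod_cast hl.ne'
  rw [hx, show 2 * Real.pi * Complex.I * ((y : ℂ) + (l : ℂ) * k) / l =
      2 * Real.pi * Complex.I * (y : ℂ) / l + (k : ℂ) * (2 * Real.pi * Complex.I) by
    field_simp]
  rw [Complex.exp_add, Complex.exp_int_mul_two_pi_mul_I, mul_one]

theorem stmt13 (p : ℕ) (hp : p.Prime) (hp3 : 3 ≤ p) (a b : ℤ)
    (ha : IsCoprime a (p : ℤ)) (e f : ℕ) (he : 1 ≤ e) (hf : 2 ≤ f) :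
    salie a ((p : ℤ) ^ e * b) (p ^ f) = 0 := by
  set l := p ^ f with hl_def
  set m := p ^ (f - 1) with hm_def
  set c : ℤ := (p : ℤ) ^ e * b with hc_def
  have hp1 : 1 < p := hp.one_lt
  have hl0 : 0 < l := pow_pos hp.pos f
  haveI : NeZero l := ⟨hl0.ne'⟩
  have hml : m < l := Nat.pow_lt_pow_right hp1 (by omega)
  have hpm : p ∣ m := dvd_pow_self p (by omega)
  have hpl : p ∣ l := dvd_pow_self p (by omega)
  have hplm : p ∣ (l - m) := Nat.dvd_sub hpl hpm
  have hmp : m * p = l := by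
    rw [hm_def, hl_def, ← pow_succ]
    congr 1; omega
  have hlem : l ∣ p ^ e * m := by
    rw [hm_def, hl_def, ← pow_add]
    exact pow_dvd_pow p (by omega)
  have cop_iff : ∀ x : ℕ, Nat.Coprime x l ↔ ¬ p ∣ x := by
    intro x
    rw [hl_def, Nat.coprime_pow_right_iff (by omega), Nat.coprime_comm,
      hp.coprime_iff_not_dvd]
  set s := (Finset.range l).filter (fun h => Nat.Coprime h l) with hs_def
  -- membership under shift
  have shift_mem : ∀ t : ℕ, p ∣ t → ∀ h ∈ s, (h + t) % l ∈ s := by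
    intro t ht h hh
    rw [hs_def, Finset.mem_filter, Finset.mem_range] at hh ⊢
    refine ⟨Nat.mod_lt _ hl0, ?_⟩
    rw [cop_iff] at hh ⊢
    intro hdvd
    have h1 : p ∣ h + t := (Nat.dvd_mod_iff hpl).mp hdvd
    exact hh.2 (by simpa using Nat.dvd_sub h1 ht)
  -- the term function
  set T : ℕ → ℂ := fun h => (jacobiSym (h : ℤ) l : ℂ) *
      Complex.exp (2 * Real.pi * Complex.I *
        ((a : ℂ) * (h : ℂ) + (c : ℂ) * ((((h : ZMod l)⁻¹).val : ℕ) : ℂ)) / (l : ℂ)) with hT_def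
  set ζ : ℂ := Complex.exp (2 * Real.pi * Complex.I * (a : ℂ) / p) with hζ_def
  -- key term identity
  have key : ∀ h ∈ s, T ((h + m) % l) = ζ * T h := by
    intro h hh
    rw [hs_def, Finset.mem_filter, Finset.mem_range] at hh
    obtain ⟨hhl, hhc⟩ := hh
    set h' := (h + m) % l with hh'_def
    have hdvd1 : (l : ℤ) ∣ (h' : ℤ) - ((h : ℤ) + m) := by
      have hq := Nat.mod_add_div (h + m) l
      rw [← hh'_def] at hq
      have hqz : (h' : ℤ) + (l : ℤ) * (((h + m) / l : ℕ) : ℤ) = (h : ℤ) + m := by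
        exact_mod_cast hq
      exact ⟨-(((h + m) / l : ℕ) : ℤ), by linarith⟩
    -- Jacobi symbol part
    have hJ : jacobiSym (h' : ℤ) l = jacobiSym (h : ℤ) l := by
      have h1 : jacobiSym (h' : ℤ) l = jacobiSym ((h : ℤ) + m) l := by
        apply jacobiSym.mod_left'
        exact (Int.modEq_iff_dvd.mpr hdvd1).symm
      rw [h1, hl_def, jacobiSym.pow_right, jacobiSym.pow_right]
      congr 1
      apply jacobiSym.mod_left'
      obtain ⟨k, hk⟩ := hpm
      exact Int.modEq_iff_dvd.mpr ⟨-(k : ℤ), by push_cast [hk]; ring⟩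
    -- inverse values
    set u : ZMod l := (h : ZMod l) with hu_def
    set v : ℕ := (u⁻¹).val with hv_def
    set w : ZMod l := ((h' : ZMod l))⁻¹ with hw_def
    have hu_unit : IsUnit u := by
      rw [hu_def, ZMod.isUnit_iff_coprime]; exact hhc
    have hh'_cast : ((h' : ℕ) : ZMod l) = u + (m : ZMod l) := by
      rw [hh'_def, ZMod.natCast_mod]; push_cast; rfl
    have hw_unit : IsUnit ((h' : ℕ) : ZMod l) := by
      rw [ZMod.isUnit_iff_coprime]
      have hmem := shift_mem m hpm h (by
        rw [hs_def, Finset.mem_filter, Finset.mem_range]; exact ⟨hhl, hhc⟩)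
      rw [hs_def, Finset.mem_filter] at hmem
      exact hmem.2
    have hinv1 : ((h' : ℕ) : ZMod l) * w = 1 := ZMod.mul_inv_of_unit _ hw_unit
    have hinv2 : u * u⁻¹ = 1 := ZMod.mul_inv_of_unit _ hu_unit
    have hpem : ((p : ZMod l)) ^ e * (m : ZMod l) = 0 := by
      have h0 : ((p ^ e * m : ℕ) : ZMod l) = 0 :=
        (ZMod.natCast_eq_zero_iff _ _).mpr hlem
      push_cast at h0
      exact h0
    -- c * w = c * u⁻¹ in ZMod l
    have hcw : (c : ZMod l) * w = (c : ZMod l) * u⁻¹ := by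
      have hdiff : w - u⁻¹ = -(m : ZMod l) * (w * u⁻¹) := by
        have h2 : w - u⁻¹ = w * (u * u⁻¹) - (((h' : ℕ) : ZMod l) * w) * u⁻¹ := by
          rw [hinv1, hinv2]; ring
        rw [h2, hh'_cast]; ring
      have h3 : (c : ZMod l) * (w - u⁻¹) = 0 := by
        rw [hdiff, hc_def]
        push_cast
        calc ((p : ZMod l) ^ e * (b : ZMod l)) * (-(m : ZMod l) * (w * u⁻¹))
            = -((b : ZMod l) * (w * u⁻¹)) * ((p : ZMod l) ^ e * (m : ZMod l)) := by ring
          _ = 0 := by rw [hpem, mul_zero]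
      linear_combination h3
    -- divisibility for the exponential
    have hdvd2 : (l : ℤ) ∣ c * (w.val : ℤ) - c * (v : ℤ) := by
      rw [← ZMod.intCast_zmod_eq_zero_iff_dvd]
      push_cast
      rw [ZMod.natCast_val, ZMod.natCast_val, ZMod.cast_id, ZMod.cast_id]
      linear_combination hcw
    -- exponential part
    have hζm : ζ = Complex.exp (2 * Real.pi * Complex.I * (((a * m : ℤ)) : ℂ) / l) := by
      rw [hζ_def]
      congr 1
      have hp0 : (p : ℂ) ≠ 0 := by exact_mod_cast hp.pos.ne'
      have hl0' : (l : ℂ) ≠ 0 := by exact_mod_cast hl0.ne'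
      have hml' : (m : ℂ) * p = l := by exact_mod_cast hmp
      rw [div_eq_div_iff hp0 hl0']; push_cast
      linear_combination (-(2:ℂ) * Real.pi * Complex.I * (a : ℂ)) * hml'
    have hexp : Complex.exp (2 * Real.pi * Complex.I *
          ((a : ℂ) * (h' : ℂ) + (c : ℂ) * ((w.val : ℕ) : ℂ)) / l) =
        ζ * Complex.exp (2 * Real.pi * Complex.I *
          ((a : ℂ) * (h : ℂ) + (c : ℂ) * ((v : ℕ) : ℂ)) / l) := by
      rw [hζm, ← Complex.exp_add]
      have e1 : (2 : ℂ) * Real.pi * Complex.I * (((a * m : ℤ)) : ℂ) / l +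
          2 * Real.pi * Complex.I * ((a : ℂ) * (h : ℂ) + (c : ℂ) * ((v : ℕ) : ℂ)) / l =
          2 * Real.pi * Complex.I * (((a * ((h : ℤ) + m) + c * v : ℤ)) : ℂ) / l := by
        push_cast
        ring
      have e2 : (2 : ℂ) * Real.pi * Complex.I *
          ((a : ℂ) * (h' : ℂ) + (c : ℂ) * ((w.val : ℕ) : ℂ)) / l =
          2 * Real.pi * Complex.I * (((a * (h' : ℤ) + c * (w.val : ℤ) : ℤ)) : ℂ) / l := by
        push_cast
        ring
      rw [e1, e2]
      apply exp_congr13 l hl0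
      have h4 : a * (h' : ℤ) + c * (w.val : ℤ) - (a * ((h : ℤ) + m) + c * v) =
          a * ((h' : ℤ) - ((h : ℤ) + m)) + (c * (w.val : ℤ) - c * v) := by ring
      rw [h4]
      exact dvd_add (Dvd.dvd.mul_left hdvd1 a) hdvd2
    rw [hT_def]
    simp only
    rw [hJ, hexp]
    ring
  -- reindex the sum
  have hreindex : ∑ h ∈ s, T ((h + m) % l) = ∑ h ∈ s, T h := by
    apply Finset.sum_nbij' (i := fun h => (h + m) % l) (j := fun k => (k + (l - m)) % l)
    · exact shift_mem m hpm
    · exact shift_mem (l - m) hplm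
    · intro h hh
      rw [hs_def, Finset.mem_filter, Finset.mem_range] at hh
      show ((h + m) % l + (l - m)) % l = h
      rw [Nat.mod_add_mod, show h + m + (l - m) = h + l by omega,
        Nat.add_mod_right, Nat.mod_eq_of_lt hh.1]
    · intro k hk
      rw [hs_def, Finset.mem_filter, Finset.mem_range] at hk
      show ((k + (l - m)) % l + m) % l = k
      rw [Nat.mod_add_mod, show k + (l - m) + m = k + l by omega,
        Nat.add_mod_right, Nat.mod_eq_of_lt hk.1]
    · intro h hh; rfl
  have hsum : salie a c l = ∑ h ∈ s, T h := rfl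
  have hS : ζ * salie a c l = salie a c l := by
    rw [hsum]
    calc ζ * ∑ h ∈ s, T h = ∑ h ∈ s, ζ * T h := by rw [Finset.mul_sum]
      _ = ∑ h ∈ s, T ((h + m) % l) := (Finset.sum_congr rfl fun h hh => (key h hh).symm)
      _ = ∑ h ∈ s, T h := hreindex
  -- ζ ≠ 1
  have hζ1 : ζ ≠ 1 := by
    intro hone
    rw [hζ_def, Complex.exp_eq_one_iff] at hone
    obtain ⟨n, hn⟩ := hone
    have hp0 : (p : ℂ) ≠ 0 := by exact_mod_cast hp.pos.ne'
    have h2π : (2 : ℂ) * Real.pi * Complex.I ≠ 0 := by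
      simp [Real.pi_ne_zero, Complex.I_ne_zero]
    have hae : (a : ℂ) = n * p := by
      have hn' : 2 * (Real.pi : ℂ) * Complex.I * (a : ℂ) =
          2 * (Real.pi : ℂ) * Complex.I * ((n : ℂ) * p) := by
        field_simp at hn
        linear_combination (2 * (Real.pi : ℂ) * Complex.I) * hn
      exact mul_left_cancel₀ h2π hn'
    have haz : a = n * p := by exact_mod_cast hae
    obtain ⟨x, y, hxy⟩ := ha
    have hdvd : (p : ℤ) ∣ 1 := by
      rw [← hxy, haz]
      exact dvd_add ⟨x * n, by ring⟩ ⟨y, by ring⟩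
    have := Int.le_of_dvd one_pos hdvd
    have : (3 : ℤ) ≤ p := by exact_mod_cast hp3
    omega
  have hfinal : (ζ - 1) * salie a c l = 0 := by linear_combination hS
  rcases mul_eq_zero.mp hfinal with h0 | h0
  · exact absurd (sub_eq_zero.mp h0) hζ1
  · exact h0
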